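/- An element g of 𝕃(p) lies in the positive cone P (i.e. g ≥ 0) if and only if in its unique normal form g = m·c + Σ_{i=1}^t m_i·x_i with 0 ≤ m_i < p_i, the integer coefficient m satisfies m ≥ 0. -/

import Mathlib

/-!
Normal forms are unique: the coefficient of `x_j` in `m • c + ∑ i, f i • x_i` is read off by the
homomorphism `𝕃(p) → ℤ/p_j` sending `x_j ↦ 1` and the other generators to `0`, and then `m` is
read off by the degree `𝕃(p) → ℤ` sending `x_i ↦ N / p_i` and `c ↦ N`, where `N = ∏ p_i`.
An element of `P` is `∑ i, n_i • x_i` with `n_i ∈ ℕ`; dividing `n_i = q_i p_i + r_i` turns it into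
the normal form `(∑ i, q_i) • c + ∑ i, r_i • x_i`, whose `c`-coefficient is nonnegative.
Conversely `c = p_1 • x_1 ∈ P`, so every normal form with `m ≥ 0` lies in `P`.
-/

/-- The subgroup of relations `p_i • x_i − c` defining `𝕃(p)` inside the free
abelian group on the generators `x_1,…,x_t` (indexed by `Fin t`) and `c`
(indexed by `Unit`). -/
def Lrel (t : ℕ) (p : Fin t → ℕ) : AddSubgroup (FreeAbelianGroup (Fin t ⊕ Unit)) :=
  AddSubgroup.closure
    {g | ∃ i : Fin t, g = (p i) • FreeAbelianGroup.of (Sum.inl i) -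
        FreeAbelianGroup.of (Sum.inr ())}

/-- The group `𝕃(p)`, presented by generators `x_1,…,x_t,c` and relations
`p_1 x_1 = ⋯ = p_t x_t = c`. -/
abbrev LGroup (t : ℕ) (p : Fin t → ℕ) :=
  FreeAbelianGroup (Fin t ⊕ Unit) ⧸ Lrel t p

/-- The generator `x_i` of `𝕃(p)`. -/
def Lx (t : ℕ) (p : Fin t → ℕ) (i : Fin t) : LGroup t p :=
  QuotientAddGroup.mk (FreeAbelianGroup.of (Sum.inl i))

/-- The canonical element `c` of `𝕃(p)`. -/
def Lc (t : ℕ) (p : Fin t → ℕ) : LGroup t p :=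
  QuotientAddGroup.mk (FreeAbelianGroup.of (Sum.inr ()))

namespace LGroup

variable {t : ℕ} {p : Fin t → ℕ}

theorem nsmul_Lx_eq_Lc (i : Fin t) : p i • Lx t p i = Lc t p := by
  rw [Lx, Lc, ← QuotientAddGroup.mk_nsmul, QuotientAddGroup.eq_iff_sub_mem]
  exact AddSubgroup.subset_closure ⟨i, rfl⟩

section lift

variable {A : Type*} [AddCommGroup A] (φ : Fin t → A) (a : A) (hφ : ∀ i, p i • φ i = a)

def lift : LGroup t p →+ A :=
  QuotientAddGroup.lift (Lrel t p) (FreeAbelianGroup.lift (Sum.elim φ fun _ => a)) <| by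
    refine (AddSubgroup.closure_le _).2 ?_
    rintro _ ⟨i, rfl⟩
    simp [hφ]

@[simp]
theorem lift_Lx (i : Fin t) : lift φ a hφ (Lx t p i) = φ i :=
  FreeAbelianGroup.lift_apply_of _ _

@[simp]
theorem lift_Lc : lift φ a hφ (Lc t p) = a :=
  FreeAbelianGroup.lift_apply_of _ _

end lift

noncomputable def degree (t : ℕ) (p : Fin t → ℕ) : LGroup t p →+ ℤ :=
  lift (fun i => (∏ j, (p j : ℤ)) / p i) (∏ j, (p j : ℤ)) fun i => by
    rw [nsmul_eq_mul]
    exact Int.mul_ediv_cancel' (Finset.dvd_prod_of_mem _ (Finset.mem_univ i))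

noncomputable def coeff (t : ℕ) (p : Fin t → ℕ) (j : Fin t) : LGroup t p →+ ZMod (p j) :=
  lift (Pi.single j 1) 0 fun i => by
    rcases eq_or_ne i j with rfl | hij
    · simp
    · simp [hij]

def normalForm (t : ℕ) (p : Fin t → ℕ) (m : ℤ) (f : Fin t → ℤ) : LGroup t p :=
  m • Lc t p + ∑ i, f i • Lx t p i

theorem degree_normalForm (m : ℤ) (f : Fin t → ℤ) :
    degree t p (normalForm t p m f) =
      m * ∏ j, (p j : ℤ) + ∑ i, f i * ((∏ j, (p j : ℤ)) / p i) := by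
  simp [degree, normalForm, map_sum]

theorem coeff_normalForm (m : ℤ) (f : Fin t → ℤ) (j : Fin t) :
    coeff t p j (normalForm t p m f) = f j := by
  simp [coeff, normalForm, map_sum, Pi.single_apply]

theorem eq_of_normalForm_eq {m m' : ℤ} {f f' : Fin t → ℤ}
    (hf : ∀ i, 0 ≤ f i ∧ f i < p i) (hf' : ∀ i, 0 ≤ f' i ∧ f' i < p i)
    (h : normalForm t p m f = normalForm t p m' f') : m = m' ∧ f = f' := by
  have hff' : f = f' := funext fun j => by
    have hj := congrArg (coeff t p j) h
    rw [coeff_normalForm, coeff_normalForm, ZMod.intCast_eq_intCast_iff'] at hj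
    rwa [Int.emod_eq_of_lt (hf j).1 (hf j).2, Int.emod_eq_of_lt (hf' j).1 (hf' j).2] at hj
  subst hff'
  have hN : ∏ j, (p j : ℤ) ≠ 0 :=
    Finset.prod_ne_zero_iff.2 fun i _ => ((hf i).1.trans_lt (hf i).2).ne'
  have hdeg := congrArg (degree t p) h
  rw [degree_normalForm, degree_normalForm, add_left_inj] at hdeg
  exact ⟨mul_right_cancel₀ hN hdeg, rfl⟩

theorem sum_nsmul_Lx_eq_normalForm (n : Fin t → ℕ) :
    ∑ i, n i • Lx t p i =
      normalForm t p ↑(∑ i, n i / p i) fun i => ↑(n i % p i) := by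
  have hdiv (i : Fin t) :
      n i • Lx t p i = (n i / p i) • Lc t p + (n i % p i) • Lx t p i := by
    rw [← nsmul_Lx_eq_Lc i, ← mul_nsmul', ← add_nsmul, Nat.div_add_mod']
  simp only [normalForm, natCast_zsmul, Finset.sum_smul, hdiv, Finset.sum_add_distrib]

theorem normalForm_mem_closure (ht : 0 < t) {m : ℤ} {f : Fin t → ℤ} (hm : 0 ≤ m)
    (hf : ∀ i, 0 ≤ f i) : normalForm t p m f ∈ AddSubmonoid.closure (Set.range (Lx t p)) := by
  have hx (i : Fin t) : Lx t p i ∈ AddSubmonoid.closure (Set.range (Lx t p)) :=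
    AddSubmonoid.subset_closure (Set.mem_range_self i)
  have hc : Lc t p ∈ AddSubmonoid.closure (Set.range (Lx t p)) :=
    nsmul_Lx_eq_Lc (p := p) ⟨0, ht⟩ ▸ nsmul_mem (hx _) _
  refine add_mem ?_ (sum_mem fun i _ => ?_)
  · lift m to ℕ using hm
    rw [natCast_zsmul]
    exact nsmul_mem hc m
  · lift f i to ℕ using hf i with k
    rw [natCast_zsmul]
    exact nsmul_mem (hx i) k

end LGroup

open LGroup in
theorem mem_positive_cone_iff_general (t : ℕ) (ht : 3 ≤ t)
    (p : Fin t → ℕ)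
    (g : LGroup t p) (m : ℤ) (f : Fin t → ℤ)
    (hf : ∀ i, 0 ≤ f i ∧ f i < (p i : ℤ))
    (hg : g = m • Lc t p + ∑ i, f i • Lx t p i) :
    g ∈ AddSubmonoid.closure (Set.range (Lx t p)) ↔ 0 ≤ m := by
  change g = normalForm t p m f at hg
  subst hg
  constructor
  · intro hmem
    obtain ⟨n, hn⟩ := AddSubmonoid.mem_closure_range_iff_of_fintype.1 hmem
    have hp (i : Fin t) : 0 < p i := by exact_mod_cast (hf i).1.trans_lt (hf i).2
    rw [sum_nsmul_Lx_eq_normalForm] at hn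
    have hrem (i : Fin t) : 0 ≤ ((n i % p i : ℕ) : ℤ) ∧ ((n i % p i : ℕ) : ℤ) < p i :=
      ⟨by positivity, by exact_mod_cast Nat.mod_lt _ (hp i)⟩
    rw [(eq_of_normalForm_eq hf hrem hn).1]
    positivity
  · exact fun hm => normalForm_mem_closure (by omega) hm fun i => (hf i).1

/-- An element `g` of `𝕃(p)` lies in the positive cone `P` generated by
`x_1,…,x_t` if and only if the coefficient `m` in its normal form
`g = m • c + ∑ i, m_i • x_i` (with `0 ≤ m_i < p_i`) satisfies `m ≥ 0`. -/
theorem mem_positive_cone_iff (t : ℕ) (ht : 3 ≤ t)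
    (p : Fin t → ℕ) (hp : ∀ i, 0 < p i)
    (g : LGroup t p) (m : ℤ) (f : Fin t → ℤ)
    (hf : ∀ i, 0 ≤ f i ∧ f i < (p i : ℤ))
    (hg : g = m • Lc t p + ∑ i, f i • Lx t p i) :
    g ∈ AddSubmonoid.closure (Set.range (Lx t p)) ↔ 0 ≤ m :=
  mem_positive_cone_iff_general t ht p g m f hf hg
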